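/- arXiv:2306.02799 — 4 statements merged into one kernel-verified Lean document; each statement's English description precedes it below -/
import Mathlib

section
/- Let N ≥ 1, let X : ℝ^N → ℝ^N be a continuous vector field, let z ∈ ℝ^N, and let γ : ℝ → ℝ^N be an integral curve of X through z (γ(0) = z and γ'(s) = X(γ(s)) for all s in a neighborhood of 0). Let u : ℝ^N → ℝ be differentiable on a neighborhood of z containing γ(s) for all small s, and suppose the function Xu is differentiable at z. Then, as h → 0, u(γ(h)) = u(z) + h·(Xu)(z) + (h²/2)·(D(Xu)(z))(X(z)) + o(h²). (This is the base step of the anisotropic Taylor theorem: the second-order Taylor expansion of u along a single horizontal vector field.) -/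
/-!
By the chain rule, `s ↦ u (γ s)` has derivative `(Xu) (γ s)` near `0`, and this derivative is
itself differentiable at `0` with derivative `D(Xu)(z) (X z)`. The second-order Taylor expansion
with Peano remainder of a real function needs no more than that: the remainder vanishes at the
base point and its derivative is `o(s)`, so the mean value inequality makes it `o(s²)`.
-/

open Filter Asymptotics Topology

section TaylorReal

variable {E : Type*} [NormedAddCommGroup E] [NormedSpace ℝ E]

theorem isLittleO_sub_pow_succ_of_eventually_hasDerivAt {f f' : ℝ → E} {x₀ : ℝ} {n : ℕ}
    (hff' : ∀ᶠ x in 𝓝 x₀, HasDerivAt f (f' x) x) (hf' : f' =o[𝓝 x₀] fun x ↦ (x - x₀) ^ n) :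
    (fun x ↦ f x - f x₀) =o[𝓝 x₀] fun x ↦ (x - x₀) ^ (n + 1) := by
  obtain ⟨δ, hδ, hball⟩ := Metric.eventually_nhds_iff_ball.mp hff'
  have hnhds : 𝓝[Metric.ball x₀ δ] x₀ = 𝓝 x₀ :=
    nhdsWithin_eq_nhds.mpr (Metric.ball_mem_nhds x₀ hδ)
  rw [← hnhds] at hf' ⊢
  exact (convex_ball x₀ δ).isLittleO_pow_succ_real (Metric.mem_ball_self hδ)
    (fun x hx ↦ (hball x hx).hasDerivWithinAt) hf'

theorem taylor_isLittleO_sq_of_hasDerivAt_deriv {f f' : ℝ → E} {f'' : E} {x₀ : ℝ}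
    (hff' : ∀ᶠ x in 𝓝 x₀, HasDerivAt f (f' x) x) (hf' : HasDerivAt f' f'' x₀) :
    (fun x ↦ f x - f x₀ - (x - x₀) • f' x₀ - ((x - x₀) ^ 2 / 2) • f'')
      =o[𝓝 x₀] fun x ↦ (x - x₀) ^ 2 := by
  set φ : ℝ → E := fun x ↦ f x - (x - x₀) • f' x₀ - ((x - x₀) ^ 2 / 2) • f''
  have hφ : ∀ᶠ x in 𝓝 x₀, HasDerivAt φ (f' x - f' x₀ - (x - x₀) • f'') x := by
    filter_upwards [hff'] with x hx
    have hlin := ((hasDerivAt_id x).sub_const x₀).smul_const (f' x₀)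
    have hquad := ((((hasDerivAt_id x).sub_const x₀).pow 2).div_const 2).smul_const f''
    exact ((hx.sub hlin).sub hquad).congr_deriv (by simp only [id]; module)
  have hφ' : (fun x ↦ f' x - f' x₀ - (x - x₀) • f'') =o[𝓝 x₀] fun x ↦ (x - x₀) ^ 1 := by
    simpa only [pow_one] using hf'.isLittleO
  convert isLittleO_sub_pow_succ_of_eventually_hasDerivAt hφ hφ' using 2 with x
  simp only [φ, sub_self, zero_smul, ne_eq, OfNat.ofNat_ne_zero, not_false_eq_true, zero_pow,
    zero_div, sub_zero]
  abel

end TaylorReal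

theorem taylor_expansion_along_vector_field_general {N : ℕ}
    (X : EuclideanSpace ℝ (Fin N) → EuclideanSpace ℝ (Fin N))
    (z : EuclideanSpace ℝ (Fin N))
    (γ : ℝ → EuclideanSpace ℝ (Fin N)) (hγ0 : γ 0 = z)
    (hγ : ∀ᶠ s in nhds (0 : ℝ), HasDerivAt γ (X (γ s)) s)
    (u : EuclideanSpace ℝ (Fin N) → ℝ)
    (U : Set (EuclideanSpace ℝ (Fin N)))
    (hu : ∀ p ∈ U, DifferentiableAt ℝ u p)
    (hγU : ∀ᶠ s in nhds (0 : ℝ), γ s ∈ U)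
    (hXu : DifferentiableAt ℝ (fun p => fderiv ℝ u p (X p)) z) :
    (fun h : ℝ => u (γ h) - u z - h * fderiv ℝ u z (X z)
        - h ^ 2 / 2 * fderiv ℝ (fun p => fderiv ℝ u p (X p)) z (X z))
      =o[nhds (0 : ℝ)] fun h => h ^ 2 := by
  subst hγ0
  have hu_comp : ∀ᶠ s in 𝓝 0, HasDerivAt (u ∘ γ) (fderiv ℝ u (γ s) (X (γ s))) s := by
    filter_upwards [hγ, hγU] with s hγs hγsU
    exact (hu (γ s) hγsU).hasFDerivAt.comp_hasDerivAt s hγs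
  have hXu_comp : HasDerivAt (fun s ↦ fderiv ℝ u (γ s) (X (γ s)))
      (fderiv ℝ (fun p ↦ fderiv ℝ u p (X p)) (γ 0) (X (γ 0))) 0 :=
    hXu.hasFDerivAt.comp_hasDerivAt 0 hγ.self_of_nhds
  simpa only [sub_zero, smul_eq_mul, Function.comp_apply] using
    taylor_isLittleO_sq_of_hasDerivAt_deriv hu_comp hXu_comp

/-- Base step of the anisotropic Taylor theorem: second-order Taylor expansion of a
function `u` along an integral curve `γ` of a single horizontal vector field `X`. -/
theorem taylor_expansion_along_vector_field {N : ℕ} (hN : 1 ≤ N)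
    (X : EuclideanSpace ℝ (Fin N) → EuclideanSpace ℝ (Fin N)) (hX : Continuous X)
    (z : EuclideanSpace ℝ (Fin N))
    (γ : ℝ → EuclideanSpace ℝ (Fin N)) (hγ0 : γ 0 = z)
    (hγ : ∀ᶠ s in nhds (0 : ℝ), HasDerivAt γ (X (γ s)) s)
    (u : EuclideanSpace ℝ (Fin N) → ℝ)
    (U : Set (EuclideanSpace ℝ (Fin N))) (hU : U ∈ nhds z)
    (hu : ∀ p ∈ U, DifferentiableAt ℝ u p)
    (hγU : ∀ᶠ s in nhds (0 : ℝ), γ s ∈ U)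
    (hXu : DifferentiableAt ℝ (fun p => fderiv ℝ u p (X p)) z) :
    (fun h : ℝ => u (γ h) - u z - h * fderiv ℝ u z (X z)
        - h ^ 2 / 2 * fderiv ℝ (fun p => fderiv ℝ u p (X p)) z (X z))
      =o[nhds (0 : ℝ)] fun h => h ^ 2 :=
  taylor_expansion_along_vector_field_general X z γ hγ0 hγ u U hu hγU hXu
end

section
/- Let X, Y : ℝ^N → ℝ^N be vector fields of class C² admitting global flows φ and ψ respectively. Fix z ∈ ℝ^N and define the commutator path P(a) = ψ(−a, φ(−a, ψ(a, φ(a, z)))). Then ‖P(a) − z − a²·[X,Y](z)‖ = o(a²) as a → 0, where [X,Y](p) = DY(p)(X(p)) − DX(p)(Y(p)) is the Lie bracket. (This second-order commutator expansion of composed flows is the geometric backbone of the inductive step of the anisotropic Taylor theorem, where increments in commutator directions are realized by four elementary flow displacements.) -/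
/-!
Each flow has a second-order Taylor expansion `Φ(b, p) = p + b V(p) + b²/2 DV(p) V(p) + o(b²)`
that is uniform for `p` near `z`: an a priori bound keeps the trajectories near their starting
points, where `DV · V` oscillates little, and the mean value inequality applied twice does the
rest. Hence composing a curve `p(a) = z + a v + a² c + o(a²)` with a flow for time `σ a` gives a
curve of the same kind, with explicitly updated `v` and `c`. Starting from the constant curve at
`z` and applying the four flows with `σ = 1, 1, -1, -1`, the first-order terms cancel and the
second-order coefficient becomes `DY(z) X(z) - DX(z) Y(z)`.
-/

open Filter Asymptotics Set Metric Topology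

section

variable {E : Type*} [NormedAddCommGroup E] [NormedSpace ℝ E]

theorem norm_sub_le_mul_of_hasDerivAt_of_norm_lt {W : E → E} {u : ℝ → E} {M R t : ℝ}
    (hu : ∀ s, HasDerivAt u (W (u s)) s) (hW : ∀ q ∈ closedBall (u 0) R, ‖W q‖ < M)
    (hM : 0 ≤ M) (ht : 0 ≤ t) (htR : M * t ≤ R) :
    ‖u t - u 0‖ ≤ M * t := by
  have hu' : ∀ s, HasDerivAt (fun s => u s - u 0) (W (u s)) s := fun s => (hu s).sub_const _
  refine image_norm_le_of_norm_deriv_right_lt_deriv_boundary (a := 0) (b := t)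
    (fun s _ => (hu' s).continuousAt.continuousWithinAt) (fun s _ => (hu' s).hasDerivWithinAt)
    (by simp) (fun s => (hasDerivAt_id s).const_mul M |>.congr_deriv (mul_one M))
    (fun s hs hus => hW _ ?_) ⟨ht, le_rfl⟩
  rw [mem_closedBall, dist_eq_norm, hus]
  exact (mul_le_mul_of_nonneg_left hs.2.le hM).trans htR

theorem norm_sub_le_mul_abs_of_hasDerivAt_of_norm_lt {W : E → E} {u : ℝ → E} {M R t : ℝ}
    (hu : ∀ s, HasDerivAt u (W (u s)) s) (hW : ∀ q ∈ closedBall (u 0) R, ‖W q‖ < M)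
    (hM : 0 ≤ M) (htR : M * |t| ≤ R) :
    ‖u t - u 0‖ ≤ M * |t| := by
  rcases le_total 0 t with ht | ht
  · rw [abs_of_nonneg ht] at htR ⊢
    exact norm_sub_le_mul_of_hasDerivAt_of_norm_lt hu hW hM ht htR
  · rw [abs_of_nonpos ht] at htR ⊢
    have hu_neg : ∀ s, HasDerivAt (fun s => u (-s)) (-W (u (-s))) s := fun s => by
      simpa [Function.comp_def] using (hu (-s)).scomp s (hasDerivAt_neg s)
    simpa using norm_sub_le_mul_of_hasDerivAt_of_norm_lt (W := fun q => -W q) hu_neg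
      (by simpa using hW) hM (neg_nonneg.2 ht) htR

theorem norm_sub_taylor_two_le {u du ddu : ℝ → E} {b C : ℝ}
    (hu : ∀ t ∈ uIcc 0 b, HasDerivAt u (du t) t) (hdu : ∀ t ∈ uIcc 0 b, HasDerivAt du (ddu t) t)
    (hC : ∀ t ∈ uIcc 0 b, ‖ddu t - ddu 0‖ ≤ C) :
    ‖u b - u 0 - b • du 0 - (b ^ 2 / 2) • ddu 0‖ ≤ C * b ^ 2 := by
  have habs : ∀ t ∈ uIcc (0:ℝ) b, |t| ≤ |b| := fun t ht => by
    simpa using abs_sub_left_of_mem_uIcc ht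
  have hC0 : 0 ≤ C := (norm_nonneg _).trans (hC 0 left_mem_uIcc)
  have hdu_lin : ∀ t ∈ uIcc 0 b, ‖du t - du 0 - t • ddu 0‖ ≤ C * |b| := fun t ht => by
    have hder : ∀ s ∈ uIcc 0 b, HasDerivWithinAt (fun s => du s - s • ddu 0)
        (ddu s - ddu 0) (uIcc 0 b) s := fun s hs =>
      ((hdu s hs).sub ((hasDerivAt_id s).smul_const (ddu 0) |>.congr_deriv (one_smul ℝ _)))
        |>.hasDerivWithinAt
    have := (convex_uIcc 0 b).norm_image_sub_le_of_norm_hasDerivWithin_le hder hC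
      left_mem_uIcc ht
    calc ‖du t - du 0 - t • ddu 0‖ = ‖(du t - t • ddu 0) - (du 0 - (0:ℝ) • ddu 0)‖ := by
          rw [zero_smul, sub_zero, sub_right_comm]
      _ ≤ C * ‖t - 0‖ := this
      _ ≤ C * |b| := by
          rw [sub_zero, Real.norm_eq_abs]; exact mul_le_mul_of_nonneg_left (habs t ht) hC0
  have hder : ∀ s ∈ uIcc 0 b, HasDerivWithinAt (fun s => u s - s • du 0 - (s ^ 2 / 2) • ddu 0)
      (du s - du 0 - s • ddu 0) (uIcc 0 b) s := fun s hs => by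
    have h1 := (hasDerivAt_id s).smul_const (du 0)
    have h2 := ((hasDerivAt_pow 2 s).div_const 2).smul_const (ddu 0)
    convert (((hu s hs).sub h1).sub h2).hasDerivWithinAt using 2 <;> simp
  have := (convex_uIcc 0 b).norm_image_sub_le_of_norm_hasDerivWithin_le hder hdu_lin
    left_mem_uIcc right_mem_uIcc
  calc ‖u b - u 0 - b • du 0 - (b ^ 2 / 2) • ddu 0‖
      = ‖(u b - b • du 0 - (b ^ 2 / 2) • ddu 0)
          - (u 0 - (0:ℝ) • du 0 - ((0:ℝ) ^ 2 / 2) • ddu 0)‖ := by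
        congr 1; simp only [zero_smul, sub_zero, zero_pow two_ne_zero, zero_div]; abel
    _ ≤ C * |b| * ‖b - 0‖ := this
    _ = C * b ^ 2 := by rw [sub_zero, Real.norm_eq_abs, mul_assoc, abs_mul_abs_self, sq]

theorem norm_flow_taylor_le {V : E → E} (hV : ContDiff ℝ 1 V) {Φ : ℝ × E → E}
    (hΦ0 : ∀ p, Φ (0, p) = p)
    (hΦ : ∀ (a : ℝ) (p : E), HasDerivAt (fun t => Φ (t, p)) (V (Φ (a, p))) a)
    {z p : E} {b r M ε : ℝ}
    (hVr : ∀ q ∈ closedBall z r,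
      ‖V q‖ < M ∧ ‖fderiv ℝ V q (V q) - fderiv ℝ V z (V z)‖ ≤ ε / 2)
    (hM : 0 ≤ M) (hb : M * |b| ≤ r / 2) (hp : p ∈ closedBall z (r / 2)) :
    ‖Φ (b, p) - p - b • V p - (b ^ 2 / 2) • fderiv ℝ V p (V p)‖ ≤ ε * b ^ 2 := by
  set LV : E → E := fun q => fderiv ℝ V q (V q)
  have hball : closedBall p (r / 2) ⊆ closedBall z r :=
    closedBall_subset_closedBall' (by linarith [mem_closedBall.1 hp])
  have hnear : ∀ t ∈ uIcc 0 b, Φ (t, p) ∈ closedBall z r := fun t ht => by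
    have hMt : M * |t| ≤ r / 2 := (mul_le_mul_of_nonneg_left
      (by simpa using abs_sub_left_of_mem_uIcc ht) hM).trans hb
    have := norm_sub_le_mul_abs_of_hasDerivAt_of_norm_lt (hΦ · p)
      (fun q hq => (hVr q (hball (by rwa [hΦ0] at hq))).1) hM hMt
    rw [hΦ0] at this
    exact hball (mem_closedBall_iff_norm.2 (this.trans hMt))
  have hLV_osc : ∀ t ∈ uIcc 0 b, ‖LV (Φ (t, p)) - LV (Φ (0, p))‖ ≤ ε := fun t ht => by
    rw [hΦ0]
    calc ‖LV (Φ (t, p)) - LV p‖ ≤ ‖LV (Φ (t, p)) - LV z‖ + ‖LV p - LV z‖ :=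
          norm_sub_le_norm_sub_add_norm_sub _ _ _ |>.trans_eq (by rw [norm_sub_rev (LV z)])
      _ ≤ ε / 2 + ε / 2 := add_le_add (hVr _ (hnear t ht)).2
          (hVr p (hball (mem_closedBall_self (dist_nonneg.trans hp)))).2
      _ = ε := add_halves ε
  have hdV : ∀ t, HasDerivAt (fun t => V (Φ (t, p))) (LV (Φ (t, p))) t := fun t =>
    (hV.differentiable one_ne_zero _).hasFDerivAt.comp_hasDerivAt t (hΦ t p)
  simpa only [hΦ0] using norm_sub_taylor_two_le (fun t _ => hΦ t p) (fun t _ => hdV t) hLV_osc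

theorem flow_taylor_isLittleO {V : E → E} (hV : ContDiff ℝ 1 V) {Φ : ℝ × E → E}
    (hΦ0 : ∀ p, Φ (0, p) = p)
    (hΦ : ∀ (a : ℝ) (p : E), HasDerivAt (fun t => Φ (t, p)) (V (Φ (a, p))) a) (z : E) :
    (fun x : ℝ × E => Φ x - x.2 - x.1 • V x.2 - (x.1 ^ 2 / 2) • fderiv ℝ V x.2 (V x.2))
      =o[𝓝 (0, z)] fun x => x.1 ^ 2 := by
  set LV : E → E := fun q => fderiv ℝ V q (V q)
  have hLV : Continuous LV := (hV.continuous_fderiv one_ne_zero).clm_apply hV.continuous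
  refine isLittleO_iff.2 fun ε hε => ?_
  set M := ‖V z‖ + 1
  obtain ⟨r, hr, hVr⟩ : ∃ r > 0, ∀ q ∈ closedBall z r, ‖V q‖ < M ∧ ‖LV q - LV z‖ ≤ ε / 2 := by
    have hVM : ∀ᶠ q in 𝓝 z, ‖V q‖ < M :=
      hV.continuous.norm.continuousAt.eventually_lt continuousAt_const (lt_add_one _)
    have hLVε : ∀ᶠ q in 𝓝 z, ‖LV q - LV z‖ ≤ ε / 2 := by
      simpa only [← dist_eq_norm] using
        hLV.continuousAt.eventually (closedBall_mem_nhds (LV z) (half_pos hε))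
    exact nhds_basis_closedBall.eventually_iff.1 (hVM.and hLVε)
  have hb : ∀ᶠ b : ℝ in 𝓝 0, M * |b| ≤ r / 2 :=
    ((continuous_const.mul continuous_abs).tendsto' (0 : ℝ) 0 (by simp)).eventually
      (eventually_le_nhds (half_pos hr))
  have hp : ∀ᶠ p in 𝓝 z, p ∈ closedBall z (r / 2) := closedBall_mem_nhds z (half_pos hr)
  rw [nhds_prod_eq]
  filter_upwards [hb.prod_mk hp] with ⟨b, p⟩ ⟨hb, hp⟩
  rw [Real.norm_eq_abs, abs_of_nonneg (sq_nonneg b)]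
  exact norm_flow_taylor_le hV hΦ0 hΦ hVr (by positivity) hb hp

def HasQuadraticExpansion (p : ℝ → E) (z v c : E) : Prop :=
  (fun a => p a - z - a • v - a ^ 2 • c) =o[𝓝 0] fun a => a ^ 2

theorem hasQuadraticExpansion_const (z : E) : HasQuadraticExpansion (fun _ => z) z 0 0 := by
  simp [HasQuadraticExpansion]

namespace HasQuadraticExpansion

variable {p : ℝ → E} {z v c : E}

theorem apply_zero (hp : HasQuadraticExpansion p z v c) : p 0 = z := by
  simpa [sub_eq_zero] using hp.isBigO.eq_zero_imp.self_of_nhds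

theorem hasDerivAt (hp : HasQuadraticExpansion p z v c) : HasDerivAt p v 0 := by
  have hsq : (fun a : ℝ => a ^ 2) =o[𝓝 0] fun a => a := by
    simpa using isLittleO_pow_id (𝕜 := ℝ) one_lt_two
  have hc : (fun a : ℝ => a ^ 2 • c) =O[𝓝 0] fun a => a ^ 2 :=
    .of_bound ‖c‖ (.of_forall fun a => by rw [norm_smul, mul_comm])
  rw [hasDerivAt_iff_isLittleO, hp.apply_zero]
  simpa using ((hp.add_isBigO hc).trans_isLittleO hsq)

theorem flow (hp : HasQuadraticExpansion p z v c) {V : E → E} (hV : ContDiff ℝ 1 V)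
    {Φ : ℝ × E → E} (hΦ0 : ∀ p, Φ (0, p) = p)
    (hΦ : ∀ (a : ℝ) (p : E), HasDerivAt (fun t => Φ (t, p)) (V (Φ (a, p))) a) (σ : ℝ) :
    HasQuadraticExpansion (fun a => Φ (σ * a, p a)) z (v + σ • V z)
      (c + σ • fderiv ℝ V z v + (σ ^ 2 / 2) • fderiv ℝ V z (V z)) := by
  set D := fderiv ℝ V z
  set LV : E → E := fun q => fderiv ℝ V q (V q)
  have hp_tendsto : Tendsto p (𝓝 0) (𝓝 z) := hp.apply_zero ▸ hp.hasDerivAt.continuousAt.tendsto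
  have hσa : (fun a : ℝ => σ * a) =O[𝓝 0] fun a => a := (isBigO_refl _ _).const_mul_left σ
  have hflow : (fun a => Φ (σ * a, p a) - p a - (σ * a) • V (p a) - ((σ * a) ^ 2 / 2) • LV (p a))
      =o[𝓝 0] fun a => a ^ 2 := by
    have hpair : Tendsto (fun a : ℝ => (σ * a, p a)) (𝓝 0) (𝓝 (0, z)) := by
      simpa using ((continuous_const_mul σ).tendsto 0).prodMk_nhds hp_tendsto
    refine ((flow_taylor_isLittleO hV hΦ0 hΦ z).comp_tendsto hpair).trans_isBigO ?_
    exact ((isBigO_refl _ _).const_mul_left (σ ^ 2)).congr_left fun a => by simp [mul_pow]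
  have hV_comp : (fun a => V (p a) - V z - a • D v) =o[𝓝 0] fun a => a := by
    have := (hV.differentiable one_ne_zero z).hasFDerivAt.comp_hasDerivAt_of_eq 0 hp.hasDerivAt
      hp.apply_zero.symm
    simpa [hasDerivAt_iff_isLittleO, hp.apply_zero, Function.comp_def] using this
  have hLV_comp : Tendsto (fun a => LV (p a) - LV z) (𝓝 0) (𝓝 0) := by
    have hLV : Continuous LV := (hV.continuous_fderiv one_ne_zero).clm_apply hV.continuous
    simpa using ((hLV.tendsto z).comp hp_tendsto).sub_const (LV z)
  have h1 : (fun a => (σ * a) • (V (p a) - V z - a • D v)) =o[𝓝 0] fun a => a ^ 2 :=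
    (hσa.smul_isLittleO hV_comp).congr_right fun a => by rw [smul_eq_mul, sq]
  have h2 : (fun a => ((σ * a) ^ 2 / 2) • (LV (p a) - LV z)) =o[𝓝 0] fun a => a ^ 2 := by
    have : (fun a : ℝ => (σ * a) ^ 2 / 2) =O[𝓝 0] fun a => a ^ 2 :=
      ((isBigO_refl _ _).const_mul_left (σ ^ 2 / 2)).congr_left fun a => by ring
    exact (this.smul_isLittleO ((isLittleO_one_iff ℝ).2 hLV_comp)).congr_right fun a => by
      rw [smul_eq_mul, mul_one]
  refine (((hflow.add hp).add h1).add h2).congr_left fun a => ?_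
  simp only [LV, D, smul_sub, smul_add, mul_pow, mul_smul]
  module

end HasQuadraticExpansion

end

/-- Second-order commutator expansion of composed flows: the four-fold commutator path
`ψ(−a, φ(−a, ψ(a, φ(a, z))))` equals `z + a² [X,Y](z) + o(a²)`. -/
theorem commutator_flow_expansion {N : ℕ}
    (X Y : EuclideanSpace ℝ (Fin N) → EuclideanSpace ℝ (Fin N))
    (hX : ContDiff ℝ 2 X) (hY : ContDiff ℝ 2 Y)
    (φ ψ : ℝ × EuclideanSpace ℝ (Fin N) → EuclideanSpace ℝ (Fin N))
    (hφ0 : ∀ p, φ (0, p) = p)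
    (hφ : ∀ (a : ℝ) (p : EuclideanSpace ℝ (Fin N)),
      HasDerivAt (fun t => φ (t, p)) (X (φ (a, p))) a)
    (hψ0 : ∀ p, ψ (0, p) = p)
    (hψ : ∀ (a : ℝ) (p : EuclideanSpace ℝ (Fin N)),
      HasDerivAt (fun t => ψ (t, p)) (Y (ψ (a, p))) a)
    (z : EuclideanSpace ℝ (Fin N)) :
    (fun a : ℝ => ‖ψ (-a, φ (-a, ψ (a, φ (a, z)))) - z
        - a ^ 2 • VectorField.lieBracket ℝ X Y z‖)
      =o[nhds (0 : ℝ)] fun a => a ^ 2 := by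
  have hX1 := hX.of_le one_le_two
  have hY1 := hY.of_le one_le_two
  have h := ((((hasQuadraticExpansion_const z).flow hX1 hφ0 hφ 1).flow hY1 hψ0 hψ 1).flow
    hX1 hφ0 hφ (-1)).flow hY1 hψ0 hψ (-1)
  refine h.norm_left.congr_left fun a => congrArg norm ?_
  simp only [VectorField.lieBracket, one_mul, neg_one_mul, map_add, map_smul, map_zero]
  module
end

section
/- Let X, Y : ℝ^N → ℝ^N be vector fields of class C² admitting global flows φ and ψ respectively, fix z ∈ ℝ^N, and define P(a) = ψ(−a, φ(−a, ψ(a, φ(a, z)))). If u : ℝ^N → ℝ is differentiable at z, then u(P(a)) = u(z) + a²·(Du(z))([X,Y](z)) + o(a²) as a → 0. In particular, the increment of u along the four-fold commutator path is governed, to second order in the anisotropic scale, by the Lie derivative of u along the bracket [X,Y]. -/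
open Filter Asymptotics

/-!
Each leg of the commutator path is a flow `θ` of a `C¹` field `W` applied to a moving base point
`c a = z + a • v + a ^ 2 • w + o(a²)`. Two facts about `θ` near `z` show that the result is again
of this form, with `v ↦ v + W z` and `w ↦ w + DW(z) v + ½ DW(z) (W z)`: the second-order Taylor
expansion of `t ↦ θ (t, z)`, and the linearization
`θ (a, c) - θ (a, z) = (c - z) + a • DW(z) (c - z) + o(a²)` for `c - z = O(a)`. The latter comes
from Grönwall's inequality on a small ball where `W` is `ε`-close to its derivative at `z`.
Running the four legs through this rule (the backward legs are the flows of `-X` and `-Y`), the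
first-order terms cancel and the second-order term is `DY(z) (X z) - DX(z) (Y z) = [X, Y](z)`;
composing with `u` finishes.
-/

open Set Metric Topology

variable {E : Type*} [NormedAddCommGroup E] [NormedSpace ℝ E]

structure IsGlobalFlow (W : E → E) (θ : ℝ × E → E) : Prop where
  map_zero : ∀ p, θ (0, p) = p
  hasDerivAt : ∀ a p, HasDerivAt (fun t => θ (t, p)) (W (θ (a, p))) a

theorem IsGlobalFlow.reverse {W : E → E} {θ : ℝ × E → E} (hθ : IsGlobalFlow W θ) :
    IsGlobalFlow (fun x => -W x) (fun q => θ (-q.1, q.2)) where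
  map_zero p := by simpa using hθ.map_zero p
  hasDerivAt a p := by
    simpa [Function.comp_def] using (hθ.hasDerivAt (-a) p).scomp a (hasDerivAt_neg a)

theorem isBigO_smul_const {α : Type*} (l : Filter α) (f : α → ℝ) (v : E) :
    (fun x => f x • v) =O[l] f :=
  isBigO_of_le' l (c := ‖v‖) fun x => by rw [norm_smul, mul_comm]

theorem isLittleO_taylor_two_of_hasDerivAt {f d : ℝ → E} {v : E}
    (hf : ∀ t, HasDerivAt f (d t) t) (hd : HasDerivAt d v 0) :
    (fun s : ℝ => f s - f 0 - s • d 0 - (s ^ 2 / 2) • v) =o[𝓝 0] fun s => s ^ 2 := by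
  have hg : ∀ s ∈ univ, HasDerivWithinAt (fun s : ℝ => f s - s • d 0 - (s ^ 2 / 2) • v)
      (d s - d 0 - s • v) univ s := by
    intro s _
    have h := ((hf s).sub ((hasDerivAt_id s).smul_const (d 0))).sub
      (((hasDerivAt_pow 2 s).div_const 2).smul_const v)
    simp only [one_smul, Nat.cast_ofNat, Nat.add_one_sub_one, pow_one, ne_eq,
      OfNat.ofNat_ne_zero, not_false_eq_true, mul_div_cancel_left₀] at h
    exact h.hasDerivWithinAt
  have hg' : (fun s : ℝ => d s - d 0 - s • v) =o[𝓝[univ] 0] fun s => (s - 0) ^ 1 := by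
    simpa using hasDerivAt_iff_isLittleO.1 hd
  have h := Convex.isLittleO_pow_succ_real convex_univ (mem_univ 0) hg hg'
  simp only [nhdsWithin_univ, sub_zero, zero_smul, ne_eq, OfNat.ofNat_ne_zero, not_false_eq_true,
    zero_pow, zero_div] at h
  exact h.congr_left fun s => by abel

theorem IsGlobalFlow.isLittleO_taylor_two {W : E → E} {θ : ℝ × E → E} (hθ : IsGlobalFlow W θ)
    {A : E →L[ℝ] E} {z : E} (hW : HasFDerivAt W A z) :
    (fun s : ℝ => θ (s, z) - z - s • W z - (s ^ 2 / 2) • A (W z)) =o[𝓝 0] fun s => s ^ 2 := by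
  have hd : HasDerivAt (fun t => W (θ (t, z))) (A (W z)) 0 := by
    have hθz := hθ.hasDerivAt 0 z
    rw [hθ.map_zero] at hθz
    exact hW.comp_hasDerivAt_of_eq 0 hθz (hθ.map_zero z).symm
  simpa [hθ.map_zero] using isLittleO_taylor_two_of_hasDerivAt (fun t => hθ.hasDerivAt t z) hd

section Trajectories

variable {W : E → E} {f g : ℝ → E}

theorem mem_closedBall_of_hasDerivAt_of_norm_lt {z : E} {r M s : ℝ}
    (hW : ∀ x ∈ closedBall z r, ‖W x‖ < M) (hf : ∀ t, HasDerivAt f (W (f t)) t)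
    (hr : 0 ≤ r) (hs : ‖f 0 - z‖ + M * s ≤ r) : ∀ t ∈ Icc 0 s, f t ∈ closedBall z r := by
  have hM : 0 ≤ M := (norm_nonneg _).trans (hW z (mem_closedBall_self hr)).le
  have hfc : Continuous f := continuous_iff_continuousAt.2 fun t => (hf t).continuousAt
  have hB : ∀ t ∈ Icc 0 s, ‖f 0 - z‖ + M * t ≤ r := fun t ht => by nlinarith [ht.2]
  have hnorm : ∀ t ∈ Icc 0 s, ‖f t - z‖ ≤ ‖f 0 - z‖ + M * t :=
    image_norm_le_of_norm_deriv_right_lt_deriv_boundary' (f := fun t => f t - z) (B' := fun _ => M)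
      (hfc.sub continuous_const).continuousOn (fun t _ => ((hf t).sub_const z).hasDerivWithinAt)
      (by simp) (by fun_prop)
      (fun t _ => (((hasDerivAt_id t).const_mul M).const_add _).hasDerivWithinAt.congr_deriv
        (by simp))
      (fun t ht heq => hW _ <| by
        rw [mem_closedBall_iff_norm, heq]; exact hB t (Ico_subset_Icc_self ht))
  exact fun t ht => mem_closedBall_iff_norm.2 ((hnorm t ht).trans (hB t ht))

variable {A : E →L[ℝ] E} {S : Set E} {ε : NNReal}

theorem ApproximatesLinearOn.lipschitzOnWith_nnnorm_add (hW : ApproximatesLinearOn W A S ε) :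
    LipschitzOnWith (‖A‖₊ + ε) W S :=
  lipschitzOnWith_iff_restrict.2 hW.lipschitz

theorem ApproximatesLinearOn.norm_trajectory_sub_le (hW : ApproximatesLinearOn W A S ε)
    (hf : ∀ t, HasDerivAt f (W (f t)) t) (hg : ∀ t, HasDerivAt g (W (g t)) t) {a : ℝ}
    (hfS : ∀ t ∈ Icc 0 a, f t ∈ S) (hgS : ∀ t ∈ Icc 0 a, g t ∈ S) :
    ∀ t ∈ Icc 0 a, ‖f t - g t‖ ≤ Real.exp ((‖A‖ + ε) * a) * ‖f 0 - g 0‖ := by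
  intro t ht
  have hfc : Continuous f := continuous_iff_continuousAt.2 fun t => (hf t).continuousAt
  have hgc : Continuous g := continuous_iff_continuousAt.2 fun t => (hg t).continuousAt
  have h := dist_le_of_trajectories_ODE_of_mem (v := fun _ => W) (s := fun _ => S)
    (fun _ _ => hW.lipschitzOnWith_nnnorm_add) hfc.continuousOn
    (fun t _ => (hf t).hasDerivWithinAt) (fun t ht => hfS t (Ico_subset_Icc_self ht))
    hgc.continuousOn (fun t _ => (hg t).hasDerivWithinAt)
    (fun t ht => hgS t (Ico_subset_Icc_self ht)) (dist_eq_norm _ _).le t ht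
  rw [dist_eq_norm, sub_zero, mul_comm] at h
  refine h.trans (mul_le_mul_of_nonneg_right (Real.exp_le_exp.2 ?_) (norm_nonneg _))
  exact mul_le_mul_of_nonneg_left ht.2 (by positivity)

theorem ApproximatesLinearOn.norm_trajectory_sub_sub_le (hW : ApproximatesLinearOn W A S ε)
    (hf : ∀ t, HasDerivAt f (W (f t)) t) (hg : ∀ t, HasDerivAt g (W (g t)) t) {a : ℝ}
    (ha : 0 ≤ a) (hfS : ∀ t ∈ Icc 0 a, f t ∈ S) (hgS : ∀ t ∈ Icc 0 a, g t ∈ S) :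
    ‖f a - g a - (f 0 - g 0) - a • A (f 0 - g 0)‖ ≤
      (ε + ‖A‖ * (‖A‖ + ε) * a) * (Real.exp ((‖A‖ + ε) * a) * ‖f 0 - g 0‖) * a := by
  set L : ℝ := ‖A‖ + ε
  set Δ := f 0 - g 0
  set B := Real.exp (L * a) * ‖Δ‖
  have hgap := hW.norm_trajectory_sub_le hf hg hfS hgS
  have hWgap : ∀ t ∈ Icc 0 a, ‖W (f t) - W (g t)‖ ≤ L * B := fun t ht => by
    have h := hW.lipschitzOnWith_nnnorm_add.norm_sub_le (hfS t ht) (hgS t ht)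
    push_cast at h
    exact h.trans (mul_le_mul_of_nonneg_left (hgap t ht) (by positivity))
  have hdrift : ∀ t ∈ Icc 0 a, ‖f t - g t - Δ‖ ≤ L * B * t := fun t ht => by
    simpa [Δ] using norm_image_sub_le_of_norm_deriv_le_segment' (f := fun t => f t - g t)
      (fun t _ => ((hf t).sub (hg t)).hasDerivWithinAt)
      (fun s hs => hWgap s ⟨hs.1, hs.2.le.trans ht.2⟩) t (right_mem_Icc.2 ht.1)
  have hderiv : ∀ t ∈ Ico 0 a, ‖W (f t) - W (g t) - A Δ‖ ≤ (ε + ‖A‖ * L * a) * B := by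
    intro t ht
    have ht' := Ico_subset_Icc_self ht
    have hsplit : W (f t) - W (g t) - A Δ
        = (W (f t) - W (g t) - A (f t - g t)) + A (f t - g t - Δ) := by
      rw [map_sub A (f t - g t) Δ]; abel
    calc ‖W (f t) - W (g t) - A Δ‖
        ≤ ε * ‖f t - g t‖ + ‖A‖ * (L * B * t) := by
          rw [hsplit]
          exact (norm_add_le _ _).trans (add_le_add (hW _ (hfS t ht') _ (hgS t ht'))
            ((A.le_opNorm _).trans (mul_le_mul_of_nonneg_left (hdrift t ht') (norm_nonneg _))))
      _ ≤ ε * B + ‖A‖ * (L * B * a) := by gcongr; exacts [hgap t ht', ht.2.le]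
      _ = (ε + ‖A‖ * L * a) * B := by ring
  simpa [Δ, sub_sub] using norm_image_sub_le_of_norm_deriv_le_segment'
    (f := fun t => f t - g t - Δ - t • A Δ)
    (fun t _ => ((((hf t).sub (hg t)).sub_const Δ).sub
      ((hasDerivAt_id t).smul_const (A Δ))).hasDerivWithinAt.congr_deriv (by simp))
    hderiv a (right_mem_Icc.2 ha)

end Trajectories

section Flow

variable {W : E → E} {θ : ℝ × E → E} {A : E →L[ℝ] E} {z : E}

theorem IsGlobalFlow.isLittleO_flow_sub_flow_nhdsGE (hθ : IsGlobalFlow W θ)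
    (hW : HasStrictFDerivAt W A z) {c : ℝ → E}
    (hc : (fun a => c a - z) =O[𝓝[≥] 0] fun a => a) :
    (fun a => θ (a, c a) - θ (a, z) - (c a - z) - a • A (c a - z)) =o[𝓝[≥] 0] fun a => a ^ 2 := by
  rw [isLittleO_iff]
  intro C hC
  obtain ⟨C₁, hC₁, hcC₁⟩ := hc.exists_pos
  -- the error constant `C₁ * (ε + ‖A‖ * L * a) * exp (L * a)` below tends to `C₁ * ε = C / 4`
  set ε : NNReal := (C / (4 * C₁)).toNNReal
  have hε : (ε : ℝ) = C / (4 * C₁) := Real.coe_toNNReal _ (by positivity)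
  obtain ⟨S, hS, hWS⟩ :=
    hW.approximates_deriv_on_nhds (c := ε) (Or.inr (Real.toNNReal_pos.2 (by positivity)))
  obtain ⟨r, hr, hrS⟩ := nhds_basis_closedBall.mem_iff.1 hS
  replace hWS := hWS.mono_set hrS
  set L : ℝ := ‖A‖ + ε
  set M : ℝ := ‖W z‖ + L * r + 1
  have hM : ∀ x ∈ closedBall z r, ‖W x‖ < M := by
    intro x hx
    have h := hWS.lipschitzOnWith_nnnorm_add.norm_sub_le hx (mem_closedBall_self hr.le)
    push_cast at h
    have hxz : ‖x - z‖ ≤ r := mem_closedBall_iff_norm.1 hx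
    nlinarith [norm_le_insert' (W x) (W z), norm_nonneg A, ε.coe_nonneg]
  have hsmall : ∀ᶠ a in 𝓝[≥] (0 : ℝ),
      (C₁ + M) * a ≤ r ∧ C₁ * (ε + ‖A‖ * L * a) * Real.exp (L * a) ≤ C := by
    refine Eventually.filter_mono nhdsWithin_le_nhds (Eventually.and ?_ ?_)
    · exact (Continuous.tendsto' (by fun_prop) 0 0 (by simp)).eventually (eventually_le_nhds hr)
    · refine (Continuous.tendsto' (by fun_prop) 0 (C / 4) ?_).eventually
        (eventually_le_nhds (by linarith))
      simp only [hε, mul_zero, add_zero, Real.exp_zero, mul_one]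
      field_simp
  filter_upwards [self_mem_nhdsWithin, hcC₁.bound, hsmall] with a (ha : 0 ≤ a) hca ⟨hr₁, hr₂⟩
  rw [Real.norm_eq_abs, abs_of_nonneg ha] at hca
  have hstay : ∀ p, ‖p - z‖ ≤ C₁ * a → ∀ t ∈ Icc 0 a, θ (t, p) ∈ closedBall z r := fun p hp =>
    mem_closedBall_of_hasDerivAt_of_norm_lt hM (fun t => hθ.hasDerivAt t p) hr.le
      (by rw [hθ.map_zero]; nlinarith)
  have key := hWS.norm_trajectory_sub_sub_le (fun t => hθ.hasDerivAt t (c a))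
    (fun t => hθ.hasDerivAt t z) ha (hstay _ hca) (hstay z (by simpa using mul_nonneg hC₁.le ha))
  simp only [hθ.map_zero] at key
  refine key.trans ?_
  rw [norm_pow, Real.norm_eq_abs, sq_abs]
  calc (ε + ‖A‖ * L * a) * (Real.exp (L * a) * ‖c a - z‖) * a
      ≤ (ε + ‖A‖ * L * a) * (Real.exp (L * a) * (C₁ * a)) * a := by gcongr
    _ = (C₁ * (ε + ‖A‖ * L * a) * Real.exp (L * a)) * a ^ 2 := by ring
    _ ≤ C * a ^ 2 := by gcongr

/-- Grönwall's inequality only runs forward in time; for `a ≤ 0` apply the `𝓝[≥] 0` case to the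
reversed flow. -/
theorem IsGlobalFlow.isLittleO_flow_sub_flow (hθ : IsGlobalFlow W θ)
    (hW : HasStrictFDerivAt W A z) {c : ℝ → E} (hc : (fun a => c a - z) =O[𝓝 0] fun a => a) :
    (fun a => θ (a, c a) - θ (a, z) - (c a - z) - a • A (c a - z)) =o[𝓝 0] fun a => a ^ 2 := by
  rw [← nhdsLE_sup_nhdsGE]
  refine IsLittleO.sup ?_ (hθ.isLittleO_flow_sub_flow_nhdsGE hW (hc.mono nhdsWithin_le_nhds))
  have hneg : Tendsto Neg.neg (𝓝[≤] (0 : ℝ)) (𝓝[≥] 0) := by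
    simpa using tendsto_neg_nhdsLE (a := (0 : ℝ))
  have hneg' : Tendsto Neg.neg (𝓝[≥] (0 : ℝ)) (𝓝 0) := by
    simpa using (tendsto_neg_nhdsGE (a := (0 : ℝ))).mono_right nhdsWithin_le_nhds
  have hc' : (fun b => c (-b) - z) =O[𝓝[≥] 0] fun b => b :=
    isBigO_neg_right.1 (hc.comp_tendsto hneg')
  have h := (hθ.reverse.isLittleO_flow_sub_flow_nhdsGE hW.neg hc').comp_tendsto hneg
  simp only [Function.comp_def, neg_sq, neg_neg] at h
  refine h.congr_left fun a => ?_
  simp only [neg_apply, neg_smul, smul_neg, neg_neg]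

theorem IsGlobalFlow.isLittleO_flow_comp_expansion (hθ : IsGlobalFlow W θ)
    (hW : HasStrictFDerivAt W A z) {c : ℝ → E} {v w : E}
    (hc : (fun a => c a - z - a • v - a ^ 2 • w) =o[𝓝 0] fun a => a ^ 2) :
    (fun a => θ (a, c a) - z - a • (v + W z) - a ^ 2 • (w + A v + (2⁻¹ : ℝ) • A (W z)))
      =o[𝓝 0] fun a => a ^ 2 := by
  have hc₂ : (fun a => c a - z - a • v) =O[𝓝 0] fun a => a ^ 2 :=
    (hc.isBigO.add (isBigO_smul_const _ _ w)).congr_left fun a => by abel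
  have hc₁ : (fun a => c a - z) =O[𝓝 0] fun a => a :=
    ((hc₂.trans (isLittleO_pow_id one_lt_two).isBigO).add (isBigO_smul_const _ _ v)).congr_left
      fun a => by abel
  have hlin : (fun a => a • A (c a - z - a • v)) =o[𝓝 0] fun a => a ^ 2 := by
    simpa using (isLittleO_id_const one_ne_zero : (fun x : ℝ => x) =o[𝓝 0] fun _ => (1 : ℝ))
      |>.smul_isBigO ((A.isBigO_comp _ _).trans hc₂)
  refine ((((hθ.isLittleO_flow_sub_flow hW hc₁).add (hθ.isLittleO_taylor_two hW.hasFDerivAt)).add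
    hc).add hlin).congr_left fun a => ?_
  simp only [map_sub, map_smul]
  module

end Flow

theorem HasFDerivAt.isLittleO_comp_sq {F : Type*} [NormedAddCommGroup F] [NormedSpace ℝ F]
    {u : E → F} {u' : E →L[ℝ] F} {z : E} (hu : HasFDerivAt u u' z) {P : ℝ → E} {w : E}
    (hP : (fun a => P a - z - a ^ 2 • w) =o[𝓝 0] fun a => a ^ 2) :
    (fun a => u (P a) - u z - a ^ 2 • u' w) =o[𝓝 0] fun a => a ^ 2 := by
  have hO : (fun a => P a - z) =O[𝓝 0] fun a => a ^ 2 :=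
    (hP.isBigO.add (isBigO_smul_const _ _ w)).congr_left fun a => by abel
  have hPz : Tendsto P (𝓝 0) (𝓝 z) := by
    refine tendsto_sub_nhds_zero_iff.1 (hO.trans_tendsto ?_)
    simpa using (continuous_pow 2).tendsto (0 : ℝ)
  refine (((hu.isLittleO.comp_tendsto hPz).trans_isBigO hO).add
    ((u'.isBigO_comp _ _).trans_isLittleO hP)).congr_left fun a => ?_
  simp only [Function.comp_apply, map_sub, map_smul]
  abel

/-- The increment of a differentiable function `u` along the four-fold commutator path is
governed, to second order, by the Lie derivative of `u` along the bracket `[X,Y]`. -/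
theorem increment_along_commutator_path {N : ℕ}
    (X Y : EuclideanSpace ℝ (Fin N) → EuclideanSpace ℝ (Fin N))
    (hX : ContDiff ℝ 2 X) (hY : ContDiff ℝ 2 Y)
    (φ ψ : ℝ × EuclideanSpace ℝ (Fin N) → EuclideanSpace ℝ (Fin N))
    (hφ0 : ∀ p, φ (0, p) = p)
    (hφ : ∀ (a : ℝ) (p : EuclideanSpace ℝ (Fin N)),
      HasDerivAt (fun t => φ (t, p)) (X (φ (a, p))) a)
    (hψ0 : ∀ p, ψ (0, p) = p)
    (hψ : ∀ (a : ℝ) (p : EuclideanSpace ℝ (Fin N)),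
      HasDerivAt (fun t => ψ (t, p)) (Y (ψ (a, p))) a)
    (z : EuclideanSpace ℝ (Fin N))
    (u : EuclideanSpace ℝ (Fin N) → ℝ) (hu : DifferentiableAt ℝ u z) :
    (fun a : ℝ => u (ψ (-a, φ (-a, ψ (a, φ (a, z))))) - u z
        - a ^ 2 * fderiv ℝ u z (VectorField.lieBracket ℝ X Y z))
      =o[nhds (0 : ℝ)] fun a => a ^ 2 := by
  have hXz : HasStrictFDerivAt X (fderiv ℝ X z) z := hX.contDiffAt.hasStrictFDerivAt two_ne_zero
  have hYz : HasStrictFDerivAt Y (fderiv ℝ Y z) z := hY.contDiffAt.hasStrictFDerivAt two_ne_zero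
  have hφ' : IsGlobalFlow X φ := ⟨hφ0, hφ⟩
  have hψ' : IsGlobalFlow Y ψ := ⟨hψ0, hψ⟩
  have h₀ : (fun a : ℝ => z - z - a • (0 : EuclideanSpace ℝ (Fin N)) - a ^ 2 • 0)
      =o[𝓝 0] fun a => a ^ 2 := by
    simp
  have h₁ := hφ'.isLittleO_flow_comp_expansion hXz (c := fun _ => z) h₀
  have h₂ := hψ'.isLittleO_flow_comp_expansion hYz h₁
  have h₃ := hφ'.reverse.isLittleO_flow_comp_expansion hXz.neg h₂
  have h₄ := hψ'.reverse.isLittleO_flow_comp_expansion hYz.neg h₃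
  have hpath : (fun a => ψ (-a, φ (-a, ψ (a, φ (a, z)))) - z
      - a ^ 2 • VectorField.lieBracket ℝ X Y z) =o[𝓝 0] fun a => a ^ 2 := by
    refine h₄.congr_left fun a => ?_
    simp only [VectorField.lieBracket, neg_apply, map_add, map_neg]
    module
  simpa using hu.hasFDerivAt.isLittleO_comp_sq hpath
end

section
/- Let Y₀, Y₁, …, Yₙ : ℝ^N → ℝ^N be C¹ vector fields admitting global flows φ₀, φ₁, …, φₙ (φᵢ(0,p) = p and ∂ₐφᵢ(a,p) = Yᵢ(φᵢ(a,p)) for all a, p). Fix z ∈ ℝ^N and define E : ℝ^{n+1} → ℝ^N by E(h₀, …, hₙ) = φₙ(hₙ, φ_{n−1}(h_{n−1}, …, φ₀(h₀, z) …)). Then E is differentiable at h = 0 and its differential at 0 is the linear map (h₀, …, hₙ) ↦ Σ_{i=0}^{n} hᵢ·Yᵢ(z). In particular, if n + 1 = N and Y₀(z), …, Yₙ(z) form a basis of ℝ^N, the differential of E at 0 is invertible. (This is the statement that the Jacobian of the exponential-type coordinate map E_I at the base point is the identity with respect to the chosen basis of vector fields.) -/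
/-!
Near `(0, z)` a flow moves with velocity close to `Y z`: since `Y` is bounded near `z`, a
fencing argument keeps a trajectory starting near `z` close to `z` for short times, and there
the mean value theorem gives `Φ (t, q) = q + t • Y z + o(|t|)` uniformly in `q`. Hence `Φ` is
Fréchet differentiable at `(0, z)` with differential `(t, v) ↦ t • Y z + v`. At `h = 0` every
intermediate point of the composition `Φₙ (hₙ, … Φ₀ (h₀, z) …)` is `z`, so the chain rule adds up
the contributions `hᵢ • Yᵢ z`. A basis makes this differential a linear isomorphism.
-/

open Filter Set Topology

variable {E : Type*} [NormedAddCommGroup E] [NormedSpace ℝ E]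

theorem norm_sub_le_mul_of_norm_deriv_lt {f f' : ℝ → E} {M r : ℝ} (hr : 0 ≤ r)
    (hf : ∀ s, HasDerivAt f (f' s) s) (hf' : ∀ s, ‖f s - f 0‖ ≤ r → ‖f' s‖ < M)
    {t : ℝ} (ht : 0 ≤ t) (htr : M * t ≤ r) : ‖f t - f 0‖ ≤ M * t := by
  have hM : 0 < M := (norm_nonneg _).trans_lt (hf' 0 (by simpa using hr))
  refine image_norm_le_of_norm_deriv_right_lt_deriv_boundary' (f := fun s => f s - f 0)
    (B := fun s => M * s) (B' := fun _ => M)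
    (continuous_iff_continuousAt.2 fun s => ((hf s).sub_const _).continuousAt).continuousOn
    (fun s _ => ((hf s).sub_const (f 0)).hasDerivWithinAt) (by simp) (by fun_prop)
    (fun s _ => by simpa using ((hasDerivAt_id s).const_mul M).hasDerivWithinAt)
    (fun s hs heq => hf' s (heq.le.trans ((mul_le_mul_of_nonneg_left hs.2.le hM.le).trans htr)))
    ⟨ht, le_rfl⟩

theorem norm_sub_le_mul_abs_of_norm_deriv_lt {f f' : ℝ → E} {M r : ℝ} (hr : 0 ≤ r)
    (hf : ∀ s, HasDerivAt f (f' s) s) (hf' : ∀ s, ‖f s - f 0‖ ≤ r → ‖f' s‖ < M)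
    {t : ℝ} (htr : M * |t| ≤ r) : ‖f t - f 0‖ ≤ M * |t| := by
  rcases le_total 0 t with ht | ht
  · rw [abs_of_nonneg ht] at htr ⊢
    exact norm_sub_le_mul_of_norm_deriv_lt hr hf hf' ht htr
  · rw [abs_of_nonpos ht] at htr ⊢
    have hfneg (s : ℝ) : HasDerivAt (fun s => f (-s)) (-f' (-s)) s := by
      simpa [Function.comp_def] using (hf (-s)).scomp s (hasDerivAt_neg s)
    simpa using norm_sub_le_mul_of_norm_deriv_lt hr hfneg
      (fun s hs => by simpa using hf' (-s) (by simpa using hs)) (neg_nonneg.2 ht) htr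

theorem norm_flow_sub_sub_smul_le {Y : E → E} {Φ : ℝ × E → E} (hΦ0 : ∀ p, Φ (0, p) = p)
    (hΦ : ∀ a p, HasDerivAt (fun t => Φ (t, p)) (Y (Φ (a, p))) a) {q y : E} {r ε : ℝ}
    (hr : 0 ≤ r) (hY : ∀ x, ‖x - q‖ ≤ r → ‖Y x - y‖ < ε) {t : ℝ}
    (ht : (‖y‖ + ε) * |t| ≤ r) :
    ‖Φ (t, q) - q - t • y‖ ≤ ε * |t| := by
  have hε : 0 < ε := (norm_nonneg _).trans_lt (hY q (by simpa using hr))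
  have hstay (s : ℝ) (hs : |s| ≤ |t|) : ‖Φ (s, q) - q‖ ≤ r := by
    have hsr : (‖y‖ + ε) * |s| ≤ r := (mul_le_mul_of_nonneg_left hs (by positivity)).trans ht
    have hspeed (s : ℝ) (hs : ‖Φ (s, q) - Φ (0, q)‖ ≤ r) : ‖Y (Φ (s, q))‖ < ‖y‖ + ε :=
      (norm_le_insert' _ _).trans_lt (add_lt_add_right (hY _ (by rwa [hΦ0] at hs)) _)
    have := norm_sub_le_mul_abs_of_norm_deriv_lt hr (fun s => hΦ s q) hspeed hsr
    rw [hΦ0] at this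
    exact this.trans hsr
  have hmvt := Convex.norm_image_sub_le_of_norm_hasDerivWithin_le
    (f := fun s => Φ (s, q) - s • y) (f' := fun s => Y (Φ (s, q)) - y) (C := ε)
    (fun s _ => by
      simpa using ((hΦ s q).fun_sub ((hasDerivAt_id s).smul_const y)).hasDerivWithinAt)
    (fun s hs => (hY _ (hstay s (by simpa using abs_sub_left_of_mem_uIcc hs))).le)
    (convex_uIcc 0 t) left_mem_uIcc right_mem_uIcc
  simpa [hΦ0, sub_right_comm] using hmvt

theorem hasFDerivAt_flow_zero {Y : E → E} {Φ : ℝ × E → E} {z : E} (hY : ContinuousAt Y z)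
    (hΦ0 : ∀ p, Φ (0, p) = p)
    (hΦ : ∀ a p, HasDerivAt (fun t => Φ (t, p)) (Y (Φ (a, p))) a) :
    HasFDerivAt Φ
      ((ContinuousLinearMap.fst ℝ ℝ E).smulRight (Y z) + ContinuousLinearMap.snd ℝ ℝ E)
      (0, z) := by
  rw [hasFDerivAt_iff_isLittleO_nhds_zero, Asymptotics.isLittleO_iff]
  intro ε hε
  obtain ⟨ρ, hρ, hYρ⟩ := Metric.continuousAt_iff.1 hY ε hε
  have hM : 0 < ‖Y z‖ + ε := by positivity
  have hsmall : ∀ᶠ v : ℝ × E in 𝓝 0, ‖v.1‖ < ρ / 2 / (‖Y z‖ + ε) ∧ ‖v.2‖ < ρ / 2 :=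
    ((continuous_fst.norm.tendsto 0).eventually_lt_const
        (by simp only [Prod.fst_zero, norm_zero]; positivity)).and
      ((continuous_snd.norm.tendsto 0).eventually_lt_const
        (by simp only [Prod.snd_zero, norm_zero]; positivity))
  filter_upwards [hsmall] with ⟨t, v⟩ ⟨ht, hv⟩
  rw [Real.norm_eq_abs, lt_div_iff₀' hM] at ht
  have hYv (x : E) (hx : ‖x - (z + v)‖ ≤ ρ / 2) : ‖Y x - Y z‖ < ε := by
    rw [← dist_eq_norm]
    refine hYρ ((dist_triangle x (z + v) z).trans_lt ?_)
    rw [dist_eq_norm, dist_eq_norm, add_sub_cancel_left]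
    linarith
  calc _ = ‖Φ (t, z + v) - (z + v) - t • Y z‖ := by
        congr 1
        simp only [Prod.mk_add_mk, zero_add, hΦ0, add_apply, ContinuousLinearMap.smulRight_apply,
          ContinuousLinearMap.coe_fst', ContinuousLinearMap.coe_snd']
        abel
    _ ≤ ε * |t| := norm_flow_sub_sub_smul_le hΦ0 hΦ (by positivity) hYv ht.le
    _ ≤ ε * ‖(t, v)‖ := by gcongr; exact norm_fst_le (t, v)

theorem HasFDerivAt.flow_comp {F : Type*} [NormedAddCommGroup F] [NormedSpace ℝ F]
    {Y : E → E} {Φ : ℝ × E → E} {z : E} (hY : ContinuousAt Y z) (hΦ0 : ∀ p, Φ (0, p) = p)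
    (hΦ : ∀ a p, HasDerivAt (fun t => Φ (t, p)) (Y (Φ (a, p))) a)
    {τ : F → ℝ} {τ' : F →L[ℝ] ℝ} {G : F → E} {G' : F →L[ℝ] E} {x : F}
    (hτ : HasFDerivAt τ τ' x) (hτx : τ x = 0) (hG : HasFDerivAt G G' x) (hGx : G x = z) :
    HasFDerivAt (fun w => Φ (τ w, G w)) (τ'.smulRight (Y z) + G') x := by
  have hflow := hasFDerivAt_flow_zero hY hΦ0 hΦ
  rw [← hτx, ← hGx] at hflow
  exact (hflow.comp x (hτ.prodMk hG)).congr_fderiv (by ext w; simp [hGx])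

theorem Fin.foldl_eq_self_of_forall_eq {α : Type*} {m : ℕ} {f : α → Fin m → α}
    (hf : ∀ x i, f x i = x) (x : α) : Fin.foldl m f x = x := by
  induction m with
  | zero => rfl
  | succ m ih => rw [Fin.foldl_succ_last, ih (fun x i => hf x i.castSucc), hf]

theorem hasFDerivAt_foldl_flow {m : ℕ} {Y : Fin m → E → E} {Φ : Fin m → ℝ × E → E} {z : E}
    (hY : ∀ i, ContinuousAt (Y i) z) (hΦ0 : ∀ i p, Φ i (0, p) = p)
    (hΦ : ∀ i a p, HasDerivAt (fun t => Φ i (t, p)) (Y i (Φ i (a, p))) a) :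
    HasFDerivAt (fun h : Fin m → ℝ => Fin.foldl m (fun q i => Φ i (h i, q)) z)
      (∑ i, (ContinuousLinearMap.proj (R := ℝ) (φ := fun _ : Fin m => ℝ) i).smulRight (Y i z))
      0 := by
  induction m with
  | zero => simpa using hasFDerivAt_const (𝕜 := ℝ) z (0 : Fin 0 → ℝ)
  | succ m ih =>
    let init : (Fin (m + 1) → ℝ) →L[ℝ] (Fin m → ℝ) :=
      ContinuousLinearMap.pi fun i => ContinuousLinearMap.proj i.castSucc
    have hG := ih (fun i => hY i.castSucc) (fun i => hΦ0 i.castSucc) (fun i => hΦ i.castSucc)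
    rw [← map_zero init] at hG
    have hstep := (ContinuousLinearMap.proj (R := ℝ) (φ := fun _ : Fin (m + 1) => ℝ)
      (Fin.last m)).hasFDerivAt.flow_comp (hY (Fin.last m)) (hΦ0 _) (hΦ _) rfl
      (hG.comp 0 init.hasFDerivAt)
      (Fin.foldl_eq_self_of_forall_eq (fun q i => by rw [map_zero]; exact hΦ0 _ q) z)
    refine (hstep.congr_fderiv ?_).congr_of_eventuallyEq
      (Eventually.of_forall fun h => Fin.foldl_succ_last _ _)
    ext h
    simp [Fin.sum_univ_castSucc, init, add_comm]

/-- The exponential-type coordinate map `E(h₀,…,hₙ) = φₙ(hₙ, … φ₀(h₀, z) …)` is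
differentiable at `h = 0` with differential `(h₀,…,hₙ) ↦ Σ hᵢ • Yᵢ(z)`; in particular,
if `n + 1 = N` and the `Yᵢ(z)` form a basis, this differential is invertible. -/
theorem exponential_map_jacobian {N n : ℕ}
    (Y : Fin (n + 1) → EuclideanSpace ℝ (Fin N) → EuclideanSpace ℝ (Fin N))
    (hY : ∀ i, ContDiff ℝ 1 (Y i))
    (Φ : Fin (n + 1) → ℝ × EuclideanSpace ℝ (Fin N) → EuclideanSpace ℝ (Fin N))
    (hΦ0 : ∀ i p, Φ i (0, p) = p)
    (hΦ : ∀ (i : Fin (n + 1)) (a : ℝ) (p : EuclideanSpace ℝ (Fin N)),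
      HasDerivAt (fun t => Φ i (t, p)) (Y i (Φ i (a, p))) a)
    (z : EuclideanSpace ℝ (Fin N)) :
    HasFDerivAt
      (fun h : Fin (n + 1) → ℝ => Fin.foldl (n + 1) (fun q i => Φ i (h i, q)) z)
      (∑ i : Fin (n + 1),
        (ContinuousLinearMap.proj (R := ℝ) (φ := fun _ : Fin (n + 1) => ℝ) i).smulRight
          (Y i z))
      (0 : Fin (n + 1) → ℝ) ∧
    (n + 1 = N → LinearIndependent ℝ (fun i => Y i z) →
      Submodule.span ℝ (Set.range fun i => Y i z) = ⊤ →
      Function.Bijective fun h : Fin (n + 1) → ℝ => ∑ i : Fin (n + 1), h i • Y i z) :=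
  ⟨hasFDerivAt_foldl_flow (fun i => (hY i).continuous.continuousAt) hΦ0 hΦ,
    fun _ hli hspan => ⟨hli.fintypeLinearCombination_injective,
      (span_range_eq_top_iff_surjective_fintypeLinearCombination ℝ _).1 hspan⟩⟩
end
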